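/- Let n be a positive integer, let l, u ∈ ℝ^n with l_i ≤ 0 ≤ u_i for all i, let s ∈ ℝ^n, and let L > 0, λ > 0. Then the minimum over δ in the box [l,u] of (L/2)‖δ − s‖² + λ‖δ‖₀ is attained and equals Σ_{i=1}^{n} min( (L/2)s_i² , λ + (L/2)(Π_{[l,u]}(s)_i − s_i)² ). -/
import Mathlib


/-- Componentwise clamp (projection onto the box `[l, u]`). -/
noncomputable def clampProj {n : ℕ} (l u s : Fin n → ℝ) : Fin n → ℝ :=
  fun i => max (l i) (min (u i) (s i))

/-- Membership in the box `[l, u]`. -/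
def inBox {n : ℕ} (l u δ : Fin n → ℝ) : Prop :=
  ∀ i, l i ≤ δ i ∧ δ i ≤ u i

/-- The ℓ0 "norm": number of nonzero entries. -/
noncomputable def l0norm {n : ℕ} (δ : Fin n → ℝ) : ℕ :=
  Nat.card {i : Fin n // δ i ≠ 0}

lemma l0_cast {n : ℕ} (δ : Fin n → ℝ) :
    (l0norm δ : ℝ) = ∑ i, if δ i ≠ 0 then (1:ℝ) else 0 := by
  unfold l0norm
  rw [Nat.card_eq_fintype_card, Fintype.card_subtype, Finset.card_filter]
  push_cast
  simp

lemma obj_split {n : ℕ} (s δ : Fin n → ℝ) (L lam : ℝ) :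
    L / 2 * (∑ i, (δ i - s i) ^ 2) + lam * (l0norm δ : ℝ) =
      ∑ i, (L / 2 * (δ i - s i) ^ 2 + lam * (if δ i ≠ 0 then (1:ℝ) else 0)) := by
  rw [l0_cast, Finset.mul_sum, Finset.mul_sum, ← Finset.sum_add_distrib]

lemma clamp_opt {l u s x : ℝ} (hlu : l ≤ 0 ∧ 0 ≤ u) (hx : l ≤ x ∧ x ≤ u) :
    (max l (min u s) - s) ^ 2 ≤ (x - s) ^ 2 := by
  obtain ⟨hl, hu⟩ := hlu
  obtain ⟨hxl, hxu⟩ := hx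
  rcases le_or_gt s u with h1 | h1
  · rw [min_eq_right h1]
    rcases le_or_gt l s with h2 | h2
    · rw [max_eq_right h2]; nlinarith [sq_nonneg (x - s)]
    · rw [max_eq_left h2.le]; nlinarith
  · rw [min_eq_left h1.le, max_eq_right (hl.trans hu)]; nlinarith

/-- The minimum of the ℓ0-regularized box-constrained proximal problem is attained
and equals the sum over coordinates of the coordinatewise minima. -/
theorem l0_prox_min_value (n : ℕ) (hn : 0 < n)
    (l u s : Fin n → ℝ) (hlu : ∀ i, l i ≤ 0 ∧ 0 ≤ u i)
    (L lam : ℝ) (hL : 0 < L) (hlam : 0 < lam) :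
    ∃ δstar : Fin n → ℝ, inBox l u δstar ∧
      (∀ δ : Fin n → ℝ, inBox l u δ →
        L / 2 * (∑ i, (δstar i - s i) ^ 2) + lam * (l0norm δstar : ℝ) ≤
          L / 2 * (∑ i, (δ i - s i) ^ 2) + lam * (l0norm δ : ℝ)) ∧
      L / 2 * (∑ i, (δstar i - s i) ^ 2) + lam * (l0norm δstar : ℝ) =
        ∑ i : Fin n,
          min (L / 2 * (s i) ^ 2) (lam + L / 2 * (clampProj l u s i - s i) ^ 2) := by
  set c : Fin n → ℝ := clampProj l u s with hc
  set δstar : Fin n → ℝ := fun i =>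
    if L / 2 * (s i) ^ 2 ≤ lam + L / 2 * (c i - s i) ^ 2 then 0 else c i with hδ
  have hcbox : ∀ i, l i ≤ c i ∧ c i ≤ u i := by
    intro i
    refine ⟨le_max_left _ _, max_le ((hlu i).1.trans (hlu i).2) (min_le_left _ _)⟩
  have hbox : inBox l u δstar := by
    intro i
    simp only [hδ]
    split
    · exact hlu i
    · exact hcbox i
  -- value of the star objective per coordinate
  have hval : ∀ i, L / 2 * (δstar i - s i) ^ 2 + lam * (if δstar i ≠ 0 then (1:ℝ) else 0)
      = min (L / 2 * (s i) ^ 2) (lam + L / 2 * (c i - s i) ^ 2) := by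
    intro i
    simp only [hδ]
    split
    · next h =>
      rw [min_eq_left h]
      simp
    · next h =>
      push_neg at h
      have hcne : c i ≠ 0 := by
        intro h0
        rw [h0] at h
        nlinarith [h]
      rw [min_eq_right (le_of_lt h)]
      simp [hcne]
      ring
  have hlb : ∀ (δ : Fin n → ℝ), inBox l u δ → ∀ i,
      min (L / 2 * (s i) ^ 2) (lam + L / 2 * (c i - s i) ^ 2) ≤
        L / 2 * (δ i - s i) ^ 2 + lam * (if δ i ≠ 0 then (1:ℝ) else 0) := by
    intro δ hδbox i
    by_cases h0 : δ i = 0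
    · simp only [h0]
      calc min (L / 2 * (s i) ^ 2) (lam + L / 2 * (c i - s i) ^ 2)
          ≤ L / 2 * (s i) ^ 2 := min_le_left _ _
        _ ≤ L / 2 * (0 - s i) ^ 2 + lam * (if (0:ℝ) ≠ 0 then (1:ℝ) else 0) := by
            simp
    · have hcl : (c i - s i) ^ 2 ≤ (δ i - s i) ^ 2 := clamp_opt (hlu i) (hδbox i)
      calc min (L / 2 * (s i) ^ 2) (lam + L / 2 * (c i - s i) ^ 2)
          ≤ lam + L / 2 * (c i - s i) ^ 2 := min_le_right _ _
        _ ≤ L / 2 * (δ i - s i) ^ 2 + lam * (if δ i ≠ 0 then (1:ℝ) else 0) := by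
            simp [h0]; nlinarith
  have hstar : L / 2 * (∑ i, (δstar i - s i) ^ 2) + lam * (l0norm δstar : ℝ) =
      ∑ i : Fin n, min (L / 2 * (s i) ^ 2) (lam + L / 2 * (c i - s i) ^ 2) := by
    rw [obj_split]
    exact Finset.sum_congr rfl (fun i _ => hval i)
  refine ⟨δstar, hbox, ?_, hstar⟩
  intro δ hδbox
  rw [hstar, obj_split]
  exact Finset.sum_le_sum (fun i _ => hlb δ hδbox i)
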